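/- Let G be a graph with a 2-edge-cut {u1u2, v1v2} separating G into G1 (containing u1, v1) and G2 (containing u2, v2). If every maximum cycle packing of G1' = G1 + u1v1 contains a cycle through the edge u1v1 and every maximum cycle packing of G2' = G2 + u2v2 contains a cycle through u2v2, and cp(G1') = cp(G1) + 1 and cp(G2') = cp(G2) + 1, then cp(G) ≥ cp(G1) + cp(G2) + 1. -/

import Mathlib

/- A multigraph on vertex type `V` is represented by its multiset of edges,
   each edge being an unordered pair (`Sym2 V`); loops are `s(v, v)` and
   parallel edges are repeated elements of the multiset. -/

open Classical

namespace MG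

variable {V : Type*}

/-- Degree of a vertex (a loop counts twice). -/
noncomputable def deg (G : Multiset (Sym2 V)) (v : V) : ℕ :=
  (G.map fun e => if e = s(v, v) then 2 else if v ∈ e then 1 else 0).sum

/-- The vertices touched by some edge. -/
def support (G : Multiset (Sym2 V)) : Set V := {v | ∃ e ∈ G, v ∈ e}

/-- Adjacency. -/
def Adj (G : Multiset (Sym2 V)) (a b : V) : Prop := s(a, b) ∈ G

/-- Reachability. -/
def Reach (G : Multiset (Sym2 V)) : V → V → Prop := Relation.ReflTransGen (Adj G)

/-- Connectedness (of the non-isolated vertices). -/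
def Conn (G : Multiset (Sym2 V)) : Prop :=
  (support G).Nonempty ∧ ∀ a ∈ support G, ∀ b ∈ support G, Reach G a b

/-- A multigraph is a cycle iff it is nonempty, connected and 2-regular. -/
def IsCycle (C : Multiset (Sym2 V)) : Prop :=
  C ≠ 0 ∧ Conn C ∧ ∀ v ∈ support C, deg C v = 2

/-- A forest contains no cycle. -/
def IsForest (G : Multiset (Sym2 V)) : Prop := ∀ C ≤ G, ¬ IsCycle C

/-- Delete a set of vertices (removing all incident edges). -/
noncomputable def deleteVerts (G : Multiset (Sym2 V)) (S : Set V) : Multiset (Sym2 V) :=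
  G.filter fun e => ∀ v ∈ e, v ∉ S

/-- Minimum size of a feedback vertex set. -/
noncomputable def fvs (G : Multiset (Sym2 V)) : ℕ :=
  sInf {n | ∃ S : Finset V, S.card = n ∧ IsForest (deleteVerts G ↑S)}

/-- `f` is a packing of `n` pairwise vertex-disjoint cycles in `G`. -/
def IsCyclePackingOn (G : Multiset (Sym2 V)) {n : ℕ} (f : Fin n → Multiset (Sym2 V)) : Prop :=
  (∀ i, f i ≤ G ∧ IsCycle (f i)) ∧
    ∀ i j, i ≠ j → Disjoint (support (f i)) (support (f j))

/-- Maximum size of a cycle packing. -/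
noncomputable def cp (G : Multiset (Sym2 V)) : ℕ :=
  sSup {n | ∃ f : Fin n → Multiset (Sym2 V), IsCyclePackingOn G f}

/-- `H` is a minor of the multigraph `G` (branch-set definition). -/
def HasMinor {W : Type*} (G : Multiset (Sym2 V)) (H : SimpleGraph W) : Prop :=
  ∃ B : W → Set V, (∀ w, (B w).Nonempty) ∧
    (∀ w w', w ≠ w' → Disjoint (B w) (B w')) ∧
    (∀ w, ∀ a ∈ B w, ∀ b ∈ B w,
      Relation.ReflTransGen (fun x y => Adj G x y ∧ x ∈ B w ∧ y ∈ B w) a b) ∧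
    (∀ w w', H.Adj w w' → ∃ a ∈ B w, ∃ b ∈ B w', Adj G a b)

/-- Planarity, via Wagner's characterization: no `K₅` minor and no `K₃,₃` minor. -/
def Planar (G : Multiset (Sym2 V)) : Prop :=
  ¬ HasMinor G (SimpleGraph.completeGraph (Fin 5)) ∧
    ¬ HasMinor G (completeBipartiteGraph (Fin 3) (Fin 3))

/-- All degrees are at most 3. -/
def Subcubic (G : Multiset (Sym2 V)) : Prop := ∀ v, deg G v ≤ 3

/-- `H` is a connected component of `M`. -/
def IsComponent (M H : Multiset (Sym2 V)) : Prop :=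
  H ≤ M ∧ Conn H ∧ ∀ e ∈ M - H, ∀ v ∈ e, v ∉ support H

end MG

/-! A maximum packing of `G1 + u1v1` has `cp G1 + 1` cycles, and one of them, `C₁`, uses `u1v1`;
the others avoid `u1` and hence lie in `G1`. Likewise for `G2 + u2v2` and a cycle `C₂` through
`u2v2`. Replacing `u1v1` and `u2v2` by the cut edges `u1u2` and `v1v2` splices `C₁` and `C₂` into
a single cycle of `G`, disjoint from the `cp G1 + cp G2` remaining cycles.

The splice is connected because deleting an edge `ab` from a cycle leaves `a` and `b` connected:
otherwise the component of `a` would contain exactly one vertex of odd degree. -/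

namespace MG

variable {V : Type*}

section Degree

variable {G : Multiset (Sym2 V)} {x y v : V}

lemma deg_cons (x y : V) (G : Multiset (Sym2 V)) (v : V) :
    deg (s(x, y) ::ₘ G) v = deg G v + (if v = x then 1 else 0) + (if v = y then 1 else 0) := by
  have hxy : (if s(x, y) = s(v, v) then 2 else if v ∈ s(x, y) then 1 else 0) =
      (if v = x then 1 else 0) + (if v = y then 1 else 0) := by
    split_ifs <;> simp_all
  simp only [deg, Multiset.map_cons, Multiset.sum_cons, hxy]
  ring

lemma deg_add (G H : Multiset (Sym2 V)) (v : V) : deg (G + H) v = deg G v + deg H v := by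
  simp only [deg, Multiset.map_add, Multiset.sum_add]

lemma deg_eq_deg_erase_add (h : s(x, y) ∈ G) (v : V) :
    deg G v = deg (G.erase s(x, y)) v + (if v = x then 1 else 0) + (if v = y then 1 else 0) := by
  rw [← deg_cons, Multiset.cons_erase h]

lemma deg_eq_zero_of_notMem_support (h : v ∉ support G) : deg G v = 0 := by
  refine Multiset.sum_eq_zero fun n hn => ?_
  obtain ⟨e, he, rfl⟩ := Multiset.mem_map.1 hn
  have hve : v ∉ e := fun hv => h ⟨e, he, hv⟩
  rw [if_neg (by rintro rfl; exact hve (Sym2.mem_mk_left v v)), if_neg hve]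

end Degree

section Support

variable {G H : Multiset (Sym2 V)}

lemma support_mono (h : G ≤ H) : support G ⊆ support H :=
  fun _ ⟨e, he, hv⟩ => ⟨e, Multiset.mem_of_le h he, hv⟩

lemma support_cons (x y : V) (G : Multiset (Sym2 V)) :
    support (s(x, y) ::ₘ G) = insert x (insert y (support G)) := by
  ext v
  simp only [support, Multiset.mem_cons, Set.mem_ofPred_eq, Set.mem_insert_iff]
  constructor
  · rintro ⟨e, rfl | he, hv⟩
    · rcases Sym2.mem_iff.1 hv with rfl | rfl <;> simp
    · exact Or.inr (Or.inr ⟨e, he, hv⟩)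
  · rintro (rfl | rfl | ⟨e, he, hv⟩)
    · exact ⟨_, Or.inl rfl, Sym2.mem_mk_left _ _⟩
    · exact ⟨_, Or.inl rfl, Sym2.mem_mk_right _ _⟩
    · exact ⟨e, Or.inr he, hv⟩

lemma support_cons_of_mem {x y : V} (hx : x ∈ support G) (hy : y ∈ support G) :
    support (s(x, y) ::ₘ G) = support G := by
  rw [support_cons, Set.insert_eq_of_mem hy, Set.insert_eq_of_mem hx]

lemma support_add (G H : Multiset (Sym2 V)) : support (G + H) = support G ∪ support H := by
  ext v
  simp only [support, Multiset.mem_add, Set.mem_union, Set.mem_ofPred_eq, or_and_right,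
    exists_or]

lemma support_erase_subset (e : Sym2 V) (G : Multiset (Sym2 V)) :
    support (G.erase e) ⊆ support G :=
  support_mono (Multiset.erase_le e G)

noncomputable def supportFinset (G : Multiset (Sym2 V)) : Finset V :=
  G.toFinset.biUnion Sym2.toFinset

lemma mem_supportFinset {v : V} : v ∈ supportFinset G ↔ v ∈ support G := by
  simp only [supportFinset, Finset.mem_biUnion, Multiset.mem_toFinset, Sym2.mem_toFinset]
  rfl

end Support

section Reach

variable {G H : Multiset (Sym2 V)}

instance : Std.Symm (Adj G) where
  symm _ _ h := by rwa [Adj, Sym2.eq_swap]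

lemma reach_symm {a b : V} (h : Reach G a b) : Reach G b a :=
  symm_of (Relation.ReflTransGen (Adj G)) h

lemma reach_mono (hGH : G ≤ H) {a b : V} (h : Reach G a b) : Reach H a b :=
  Relation.ReflTransGen.mono (r := Adj G) (fun _ _ hx => Multiset.mem_of_le hGH hx) _ _ h

lemma reach_erase_or {a b x : V} (h : Reach G a x) :
    Reach (G.erase s(a, b)) a x ∨ Reach (G.erase s(a, b)) b x := by
  induction h with
  | refl => exact Or.inl .refl
  | @tail c d _ hcd ih =>
    by_cases he : s(c, d) = s(a, b)
    · rcases Sym2.eq_iff.1 he with ⟨rfl, rfl⟩ | ⟨rfl, rfl⟩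
      · exact Or.inr .refl
      · exact Or.inl .refl
    · have hcd' : Adj (G.erase s(a, b)) c d := (Multiset.mem_erase_of_ne he).2 hcd
      exact ih.imp (·.tail hcd') (·.tail hcd')

end Reach

section Parity

variable {G C : Multiset (Sym2 V)}

lemma even_sum_deg_of_closed (S : Finset V) (G : Multiset (Sym2 V))
    (hS : ∀ x y, s(x, y) ∈ G → (x ∈ S ↔ y ∈ S)) : Even (∑ v ∈ S, deg G v) := by
  induction G using Multiset.induction with
  | empty => simp [deg]
  | cons e G ih =>
    induction e using Sym2.ind with
    | h x y =>
    have hxy := hS x y (Multiset.mem_cons_self _ _)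
    simp only [deg_cons, Finset.sum_add_distrib, Finset.sum_ite_eq']
    rw [add_assoc]
    refine (ih fun a b h => hS a b (Multiset.mem_cons_of_mem h)).add ?_
    by_cases hx : x ∈ S <;> simp [hx, ← hxy]

lemma reach_of_odd_deg {a b : V} (ha : Odd (deg G a))
    (heven : ∀ v, v ≠ a → v ≠ b → Even (deg G v)) : Reach G a b := by
  by_contra hab
  set S := (supportFinset G).filter (Reach G a)
  have ha_supp : a ∈ support G := by
    by_contra h
    rw [deg_eq_zero_of_notMem_support h] at ha
    exact Nat.not_odd_zero ha
  have haS : a ∈ S := Finset.mem_filter.2 ⟨mem_supportFinset.2 ha_supp, .refl⟩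
  have hS_step : ∀ x y, s(x, y) ∈ G → x ∈ S → y ∈ S := fun x y h hx =>
    Finset.mem_filter.2
      ⟨mem_supportFinset.2 ⟨_, h, Sym2.mem_mk_right x y⟩, (Finset.mem_filter.1 hx).2.tail h⟩
  have hS : ∀ x y, s(x, y) ∈ G → (x ∈ S ↔ y ∈ S) := fun x y h =>
    ⟨hS_step x y h, hS_step y x (Sym2.eq_swap ▸ h)⟩
  have hrest : Even (∑ v ∈ S.erase a, deg G v) :=
    Finset.sum_induction _ Even (fun _ _ => Even.add) Even.zero fun v hv =>
      heven v (Finset.ne_of_mem_erase hv) fun hvb =>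
        hab (hvb ▸ (Finset.mem_filter.1 (Finset.mem_of_mem_erase hv)).2)
  have htotal := even_sum_deg_of_closed S G hS
  rw [← Finset.add_sum_erase S _ haS] at htotal
  exact Nat.not_even_iff_odd.2 ha ((Nat.even_add.1 htotal).2 hrest)

lemma IsCycle.even_deg (hC : IsCycle C) (v : V) : Even (deg C v) := by
  by_cases hv : v ∈ support C
  · rw [hC.2.2 v hv]; exact even_two
  · rw [deg_eq_zero_of_notMem_support hv]; exact Even.zero

lemma IsCycle.reach_erase (hC : IsCycle C) {a b : V} (he : s(a, b) ∈ C) :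
    Reach (C.erase s(a, b)) a b := by
  rcases eq_or_ne a b with rfl | hab
  · exact .refl
  refine reach_of_odd_deg ?_ fun v hva hvb => ?_
  · have hdeg := deg_eq_deg_erase_add he a
    rw [hC.2.2 a ⟨_, he, Sym2.mem_mk_left a b⟩, if_pos rfl, if_neg hab] at hdeg
    rw [show deg (C.erase s(a, b)) a = 1 by omega]
    exact odd_one
  · have hdeg := deg_eq_deg_erase_add he v
    rw [if_neg hva, if_neg hvb] at hdeg
    simpa [hdeg] using hC.even_deg v

lemma IsCycle.reach_erase_of_mem_support (hC : IsCycle C) {a b x : V} (he : s(a, b) ∈ C)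
    (hx : x ∈ support C) : Reach (C.erase s(a, b)) a x :=
  (reach_erase_or (hC.2.1.2 a ⟨_, he, Sym2.mem_mk_left a b⟩ x hx)).elim id
    (hC.reach_erase he).trans

end Parity

section Splice

variable {C₁ C₂ : Multiset (Sym2 V)} {u₁ v₁ u₂ v₂ : V}

noncomputable def splice (C₁ C₂ : Multiset (Sym2 V)) (u₁ v₁ u₂ v₂ : V) : Multiset (Sym2 V) :=
  s(u₁, u₂) ::ₘ s(v₁, v₂) ::ₘ (C₁.erase s(u₁, v₁) + C₂.erase s(u₂, v₂))

lemma splice_comm : splice C₂ C₁ u₂ v₂ u₁ v₁ = splice C₁ C₂ u₁ v₁ u₂ v₂ := by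
  rw [splice, splice, Sym2.eq_swap (a := u₂), Sym2.eq_swap (a := v₂), add_comm]

lemma splice_le {G₁ G₂ : Multiset (Sym2 V)} (h₁ : C₁ ≤ s(u₁, v₁) ::ₘ G₁)
    (h₂ : C₂ ≤ s(u₂, v₂) ::ₘ G₂) :
    splice C₁ C₂ u₁ v₁ u₂ v₂ ≤ s(u₁, u₂) ::ₘ s(v₁, v₂) ::ₘ (G₁ + G₂) := by
  have h₁' := Multiset.erase_le_erase s(u₁, v₁) h₁
  have h₂' := Multiset.erase_le_erase s(u₂, v₂) h₂
  rw [Multiset.erase_cons_head] at h₁' h₂'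
  exact Multiset.cons_le_cons _ (Multiset.cons_le_cons _ (add_le_add h₁' h₂'))

lemma support_splice_subset (he₁ : s(u₁, v₁) ∈ C₁) (he₂ : s(u₂, v₂) ∈ C₂) :
    support (splice C₁ C₂ u₁ v₁ u₂ v₂) ⊆ support C₁ ∪ support C₂ := by
  have hu₁ : u₁ ∈ support C₁ := ⟨_, he₁, Sym2.mem_mk_left _ _⟩
  have hv₁ : v₁ ∈ support C₁ := ⟨_, he₁, Sym2.mem_mk_right _ _⟩
  have hu₂ : u₂ ∈ support C₂ := ⟨_, he₂, Sym2.mem_mk_left _ _⟩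
  have hv₂ : v₂ ∈ support C₂ := ⟨_, he₂, Sym2.mem_mk_right _ _⟩
  rw [splice, support_cons, support_cons, support_add]
  refine Set.insert_subset (.inl hu₁) (Set.insert_subset (.inr hu₂) (Set.insert_subset (.inl hv₁)
    (Set.insert_subset (.inr hv₂) (Set.union_subset_union ?_ ?_)))) <;>
  exact support_erase_subset _ _

lemma deg_splice_of_mem_support_left (hC₁ : IsCycle C₁) (he₁ : s(u₁, v₁) ∈ C₁)
    (he₂ : s(u₂, v₂) ∈ C₂) (hd : Disjoint (support C₁) (support C₂)) {v : V}
    (hv : v ∈ support C₁) : deg (splice C₁ C₂ u₁ v₁ u₂ v₂) v = 2 := by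
  have hvC₂ : v ∉ support C₂ := Set.disjoint_left.1 hd hv
  have hvu₂ : v ≠ u₂ := by rintro rfl; exact hvC₂ ⟨_, he₂, Sym2.mem_mk_left _ _⟩
  have hvv₂ : v ≠ v₂ := by rintro rfl; exact hvC₂ ⟨_, he₂, Sym2.mem_mk_right _ _⟩
  have hP₂ : deg (C₂.erase s(u₂, v₂)) v = 0 :=
    deg_eq_zero_of_notMem_support fun h => hvC₂ (support_erase_subset _ _ h)
  have hC₁v := deg_eq_deg_erase_add he₁ v
  rw [hC₁.2.2 v hv] at hC₁v
  rw [splice, deg_cons, deg_cons, deg_add, hP₂, if_neg hvu₂, if_neg hvv₂]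
  split_ifs at hC₁v ⊢ <;> omega

lemma IsCycle.splice (hC₁ : IsCycle C₁) (hC₂ : IsCycle C₂) (he₁ : s(u₁, v₁) ∈ C₁)
    (he₂ : s(u₂, v₂) ∈ C₂) (hd : Disjoint (support C₁) (support C₂)) :
    IsCycle (splice C₁ C₂ u₁ v₁ u₂ v₂) := by
  set D := MG.splice C₁ C₂ u₁ v₁ u₂ v₂ with hD
  have hP₁₂ : C₁.erase s(u₁, v₁) + C₂.erase s(u₂, v₂) ≤ D :=
    (Multiset.le_cons_self _ _).trans (Multiset.le_cons_self _ _)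
  have hP₁ := (Multiset.le_add_right _ _).trans hP₁₂
  have hP₂ := (Multiset.le_add_left _ _).trans hP₁₂
  have hu₁u₂ : Adj D u₁ u₂ := Multiset.mem_cons_self _ _
  have hreach : ∀ x ∈ support D, Reach D u₁ x := by
    intro x hx
    rcases support_splice_subset he₁ he₂ hx with hx | hx
    · exact reach_mono hP₁ (hC₁.reach_erase_of_mem_support he₁ hx)
    · exact .head hu₁u₂ (reach_mono hP₂ (hC₂.reach_erase_of_mem_support he₂ hx))
  refine ⟨Multiset.cons_ne_zero, ⟨⟨u₁, _, hu₁u₂, Sym2.mem_mk_left _ _⟩, fun a ha b hb =>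
    (reach_symm (hreach a ha)).trans (hreach b hb)⟩, fun v hv => ?_⟩
  rcases support_splice_subset he₁ he₂ hv with hv | hv
  · exact deg_splice_of_mem_support_left hC₁ he₁ he₂ hd hv
  · rw [hD, ← splice_comm]
    exact deg_splice_of_mem_support_left hC₂ he₂ he₁ hd.symm hv

end Splice

section Packing

variable {G H : Multiset (Sym2 V)} {m n : ℕ}

lemma IsCyclePackingOn.comp {f : Fin m → Multiset (Sym2 V)} (hf : IsCyclePackingOn G f)
    {g : Fin n → Fin m} (hg : Function.Injective g) : IsCyclePackingOn G (f ∘ g) :=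
  ⟨fun _ => hf.1 _, fun _ _ hij => hf.2 _ _ (hg.ne hij)⟩

lemma IsCyclePackingOn.mono {f : Fin n → Multiset (Sym2 V)} (hf : IsCyclePackingOn G f)
    (hGH : G ≤ H) : IsCyclePackingOn H f :=
  ⟨fun i => ⟨(hf.1 i).1.trans hGH, (hf.1 i).2⟩, hf.2⟩

lemma IsCyclePackingOn.append {A : Fin m → Multiset (Sym2 V)} {B : Fin n → Multiset (Sym2 V)}
    (hA : IsCyclePackingOn G A) (hB : IsCyclePackingOn G B)
    (hAB : ∀ i j, Disjoint (support (A i)) (support (B j))) :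
    IsCyclePackingOn G (Fin.append A B) := by
  refine ⟨(Fin.forall_fin_add _).2 ⟨by simpa using hA.1, by simpa using hB.1⟩, ?_⟩
  refine (Fin.forall_fin_add _).2 ⟨fun i => (Fin.forall_fin_add _).2 ⟨?_, ?_⟩,
    fun i => (Fin.forall_fin_add _).2 ⟨?_, ?_⟩⟩ <;> intro j hij <;>
    simp only [Fin.append_left, Fin.append_right]
  · exact hA.2 i j fun h => hij (h ▸ rfl)
  · exact hAB i j
  · exact (hAB j i).symm
  · exact hB.2 i j fun h => hij (h ▸ rfl)

lemma isCyclePackingOn_fin_one {C : Multiset (Sym2 V)} (hCG : C ≤ G) (hC : IsCycle C) :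
    IsCyclePackingOn G (fun _ : Fin 1 => C) :=
  ⟨fun _ => ⟨hCG, hC⟩, fun i j hij => absurd (Subsingleton.elim i j) hij⟩

lemma bddAbove_setOf_isCyclePackingOn (G : Multiset (Sym2 V)) :
    BddAbove {n | ∃ f : Fin n → Multiset (Sym2 V), IsCyclePackingOn G f} := by
  refine ⟨G.toFinset.card, ?_⟩
  rintro n ⟨f, hf⟩
  choose e he using fun i => Multiset.exists_mem_of_ne_zero (hf.1 i).2.1
  have hinj : Set.InjOn e (Finset.univ : Finset (Fin n)) := by
    intro i _ j _ hij
    by_contra hne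
    exact Set.disjoint_left.1 (hf.2 i j hne) ⟨_, he i, Sym2.out_fst_mem _⟩
      ⟨_, hij ▸ he j, Sym2.out_fst_mem _⟩
  simpa using Finset.card_le_card_of_injOn e
    (fun i _ => Multiset.mem_toFinset.2 (Multiset.mem_of_le (hf.1 i).1 (he i))) hinj

lemma le_cp {f : Fin n → Multiset (Sym2 V)} (hf : IsCyclePackingOn G f) : n ≤ cp G :=
  le_csSup (bddAbove_setOf_isCyclePackingOn G) ⟨f, hf⟩

lemma exists_isCyclePackingOn_cp (G : Multiset (Sym2 V)) :
    ∃ f : Fin (cp G) → Multiset (Sym2 V), IsCyclePackingOn G f := by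
  have hempty : ∃ f : Fin 0 → Multiset (Sym2 V), IsCyclePackingOn G f :=
    ⟨fun _ => 0, fun i => i.elim0, fun i => i.elim0⟩
  exact Nat.sSup_mem ⟨0, hempty⟩ (bddAbove_setOf_isCyclePackingOn G)

lemma exists_cycle_mem_and_disjoint_packing {e : Sym2 V}
    (hmax : ∀ f : Fin (cp (e ::ₘ H)) → Multiset (Sym2 V),
      IsCyclePackingOn (e ::ₘ H) f → ∃ i, e ∈ f i)
    (hcp : cp (e ::ₘ H) = n + 1) :
    ∃ C ≤ e ::ₘ H, IsCycle C ∧ e ∈ C ∧ ∃ A : Fin n → Multiset (Sym2 V),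
      IsCyclePackingOn H A ∧ ∀ j, Disjoint (support (A j)) (support C) := by
  obtain ⟨f, hf⟩ : ∃ f : Fin (n + 1) → Multiset (Sym2 V), IsCyclePackingOn (e ::ₘ H) f :=
    hcp ▸ exists_isCyclePackingOn_cp _
  rw [hcp] at hmax
  obtain ⟨i, hei⟩ := hmax f hf
  have hdisj : ∀ j, Disjoint (support (f (i.succAbove j))) (support (f i)) := fun j =>
    hf.2 _ _ (Fin.succAbove_ne i j)
  refine ⟨f i, (hf.1 i).1, (hf.1 i).2, hei, f ∘ i.succAbove, ⟨fun j => ⟨?_, (hf.1 _).2⟩,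
    (hf.comp Fin.succAbove_right_injective).2⟩, hdisj⟩
  refine (Multiset.le_cons_of_notMem fun he => ?_).1 (hf.1 _).1
  exact Set.disjoint_left.1 (hdisj j) ⟨e, he, Sym2.out_fst_mem e⟩ ⟨e, hei, Sym2.out_fst_mem e⟩

end Packing

end MG

theorem cp_two_edge_cut_general {V : Type*} (G G1 G2 : Multiset (Sym2 V)) (u1 v1 u2 v2 : V)
    (hG : G = s(u1, u2) ::ₘ s(v1, v2) ::ₘ (G1 + G2))
    (hdisj : Disjoint (MG.support G1) (MG.support G2))
    (hu1 : u1 ∈ MG.support G1) (hv1 : v1 ∈ MG.support G1)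
    (hu2 : u2 ∈ MG.support G2) (hv2 : v2 ∈ MG.support G2)
    (hmax1 : ∀ f : Fin (MG.cp (s(u1, v1) ::ₘ G1)) → Multiset (Sym2 V),
      MG.IsCyclePackingOn (s(u1, v1) ::ₘ G1) f → ∃ i, s(u1, v1) ∈ f i)
    (hmax2 : ∀ f : Fin (MG.cp (s(u2, v2) ::ₘ G2)) → Multiset (Sym2 V),
      MG.IsCyclePackingOn (s(u2, v2) ::ₘ G2) f → ∃ i, s(u2, v2) ∈ f i)
    (hcp1 : MG.cp (s(u1, v1) ::ₘ G1) = MG.cp G1 + 1)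
    (hcp2 : MG.cp (s(u2, v2) ::ₘ G2) = MG.cp G2 + 1) :
    MG.cp G1 + MG.cp G2 + 1 ≤ MG.cp G := by
  obtain ⟨C₁, hC₁, hcyc₁, he₁, A, hA, hAC₁⟩ := MG.exists_cycle_mem_and_disjoint_packing hmax1 hcp1
  obtain ⟨C₂, hC₂, hcyc₂, he₂, B, hB, hBC₂⟩ := MG.exists_cycle_mem_and_disjoint_packing hmax2 hcp2
  have hsC₁ : MG.support C₁ ⊆ MG.support G1 :=
    (MG.support_mono hC₁).trans (MG.support_cons_of_mem hu1 hv1).le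
  have hsC₂ : MG.support C₂ ⊆ MG.support G2 :=
    (MG.support_mono hC₂).trans (MG.support_cons_of_mem hu2 hv2).le
  have hAG₂ i : Disjoint (MG.support (A i)) (MG.support G2) :=
    hdisj.mono_left (MG.support_mono (hA.1 i).1)
  have hBG₁ i : Disjoint (MG.support (B i)) (MG.support G1) :=
    hdisj.symm.mono_left (MG.support_mono (hB.1 i).1)
  have hG₁ : G1 ≤ G := hG ▸ (Multiset.le_add_right _ _).trans
    ((Multiset.le_cons_self _ _).trans (Multiset.le_cons_self _ _))
  have hG₂ : G2 ≤ G := hG ▸ (Multiset.le_add_left _ _).trans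
    ((Multiset.le_cons_self _ _).trans (Multiset.le_cons_self _ _))
  have hAB : MG.IsCyclePackingOn G (Fin.append A B) :=
    (hA.mono hG₁).append (hB.mono hG₂) fun i j => (hAG₂ i).mono_right (MG.support_mono (hB.1 j).1)
  set D := MG.splice C₁ C₂ u1 v1 u2 v2
  have hD : MG.IsCycle D := hcyc₁.splice hcyc₂ he₁ he₂ (hdisj.mono hsC₁ hsC₂)
  have hABD : ∀ i, Disjoint (MG.support (Fin.append A B i)) (MG.support D) := by
    refine (Fin.forall_fin_add _).2 ⟨fun i => ?_, fun i => ?_⟩ <;>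
      simp only [Fin.append_left, Fin.append_right] <;>
      refine .mono_right (MG.support_splice_subset he₁ he₂) (Set.disjoint_union_right.2 ⟨?_, ?_⟩)
    exacts [hAC₁ i, (hAG₂ i).mono_right hsC₂, (hBG₁ i).mono_right hsC₁, hBC₂ i]
  exact MG.le_cp (hAB.append (MG.isCyclePackingOn_fin_one (hG ▸ MG.splice_le hC₁ hC₂) hD)
    fun i _ => hABD i)

/-- For a 2-edge-cut `{u₁u₂, v₁v₂}` separating `G` into `G1` and `G2`, if every
maximum cycle packing of `G1' = G1 + u₁v₁` uses the edge `u₁v₁`, every maximum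
cycle packing of `G2' = G2 + u₂v₂` uses the edge `u₂v₂`, and
`cp G1' = cp G1 + 1` and `cp G2' = cp G2 + 1`, then `cp G ≥ cp G1 + cp G2 + 1`. -/
theorem cp_two_edge_cut {V : Type*} (G G1 G2 : Multiset (Sym2 V)) (u1 v1 u2 v2 : V)
    (hG : G = s(u1, u2) ::ₘ s(v1, v2) ::ₘ (G1 + G2))
    (hdisj : Disjoint (MG.support G1) (MG.support G2))
    (hc1 : MG.Conn G1) (hc2 : MG.Conn G2)
    (hu1 : u1 ∈ MG.support G1) (hv1 : v1 ∈ MG.support G1)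
    (hu2 : u2 ∈ MG.support G2) (hv2 : v2 ∈ MG.support G2)
    (hmax1 : ∀ f : Fin (MG.cp (s(u1, v1) ::ₘ G1)) → Multiset (Sym2 V),
      MG.IsCyclePackingOn (s(u1, v1) ::ₘ G1) f → ∃ i, s(u1, v1) ∈ f i)
    (hmax2 : ∀ f : Fin (MG.cp (s(u2, v2) ::ₘ G2)) → Multiset (Sym2 V),
      MG.IsCyclePackingOn (s(u2, v2) ::ₘ G2) f → ∃ i, s(u2, v2) ∈ f i)
    (hcp1 : MG.cp (s(u1, v1) ::ₘ G1) = MG.cp G1 + 1)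
    (hcp2 : MG.cp (s(u2, v2) ::ₘ G2) = MG.cp G2 + 1) :
    MG.cp G1 + MG.cp G2 + 1 ≤ MG.cp G :=
  cp_two_edge_cut_general G G1 G2 u1 v1 u2 v2 hG hdisj hu1 hv1 hu2 hv2 hmax1 hmax2 hcp1 hcp2
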